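/- Let (X, d) be a metric space and F ⊆ X. If there exists a finite nonzero Borel measure μ supported on F such that the s-energy ∫_F ∫_F d(x,y)^{−s} dμ(x) dμ(y) is finite for some s ≥ 0, then the Hausdorff dimension of F is at least s. -/

import Mathlib

/-!
Finiteness of the energy makes the potential `∫ d(x,y)^{-s} dμ(y)` finite at `μ`-a.e. `x`. At such
a point `μ` has no atom, so the potential restricted to small balls `B(x,r)` tends to `0`; since it
dominates `r^{-s} μ(B(x,r))`, we get `μ(B(x,r)) ≤ r^s` for all `r` below some `δ(x) > 0`. A uniform
`δ` works on a subset `E ⊆ F` of positive measure, and the mass distribution principle gives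
`μH[s] E ≥ μ E > 0`.
-/

open MeasureTheory Metric Set Filter Topology
open scoped ENNReal

theorem lowerSemicontinuous_lintegral {X Y : Type*} [TopologicalSpace X]
    [FirstCountableTopology X] [MeasurableSpace Y] {μ : Measure Y} {f : X → Y → ℝ≥0∞}
    (hf : ∀ x, Measurable (f x)) (hc : ∀ y, LowerSemicontinuous (f · y)) :
    LowerSemicontinuous fun x => ∫⁻ y, f x y ∂μ := by
  refine lowerSemicontinuous_iff_le_liminf.2 fun x => ?_
  calc ∫⁻ y, f x y ∂μ ≤ ∫⁻ y, liminf (f · y) (𝓝 x) ∂μ :=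
        lintegral_mono fun y => (hc y).le_liminf x
    _ ≤ liminf (fun x' => ∫⁻ y, f x' y ∂μ) (𝓝 x) := lintegral_liminf_le hf

theorem iInter_closedEBall_pos {X : Type*} [EMetricSpace X] (x : X) :
    ⋂ r > 0, closedEBall x r = {x} := by
  refine Subset.antisymm (fun y hy => ?_) ?_
  · simp only [mem_iInter, mem_closedEBall] at hy
    exact edist_le_zero.1 (le_of_forall_gt_imp_ge_of_dense hy)
  · exact singleton_subset_iff.2 (mem_iInter₂.2 fun _ _ => mem_closedEBall_self)

theorem tendsto_measure_closedEBall_nhdsGT {X : Type*} [EMetricSpace X] [MeasurableSpace X]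
    [OpensMeasurableSpace X] (ν : Measure X) [IsFiniteMeasure ν] (x : X) :
    Tendsto (fun r => ν (closedEBall x r)) (𝓝[>] 0) (𝓝 (ν {x})) := by
  rw [← iInter_closedEBall_pos x]
  exact tendsto_measure_biInter_gt (fun r _ => isClosed_closedEBall.nullMeasurableSet)
    (fun r r' _ h => closedEBall_subset_closedEBall h) ⟨1, one_pos, measure_ne_top ν _⟩

section Energy

variable {X : Type*} [EMetricSpace X] [MeasurableSpace X] [OpensMeasurableSpace X] {μ : Measure X}
  {s : ℝ}

theorem rpow_neg_mul_measure_closedEBall_le (hs : 0 ≤ s) (x : X) (r : ℝ≥0∞) :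
    r ^ (-s) * μ (closedEBall x r) ≤ ∫⁻ y in closedEBall x r, edist x y ^ (-s) ∂μ := by
  rw [← setLIntegral_const]
  refine setLIntegral_mono (by fun_prop) fun y hy => ?_
  rw [ENNReal.rpow_neg, ENNReal.rpow_neg]
  exact ENNReal.inv_le_inv.2 (ENNReal.rpow_le_rpow (mem_closedEBall'.1 hy) hs)

theorem exists_forall_measure_closedEBall_le_rpow (hs : 0 < s) {x : X}
    (hx : ∫⁻ y, edist x y ^ (-s) ∂μ ≠ ∞) :
    ∃ δ > 0, ∀ r ≤ δ, μ (closedEBall x r) ≤ r ^ s := by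
  set ν := μ.withDensity fun y => edist x y ^ (-s)
  have : IsFiniteMeasure ν := isFiniteMeasure_withDensity hx
  have hνx : ν {x} = 0 := by
    have hν : ν {x} = ∞ * μ {x} := by
      rw [withDensity_apply _ (measurableSet_singleton x), lintegral_singleton, edist_self,
        ENNReal.zero_rpow_of_neg (neg_lt_zero.2 hs)]
    have hμx : μ {x} = 0 := by
      by_contra h
      exact measure_ne_top ν {x} (hν.trans (ENNReal.top_mul h))
    rw [hν, hμx, mul_zero]
  have hev : ∀ᶠ r in 𝓝[>] 0, ν (closedEBall x r) < 1 :=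
    (tendsto_measure_closedEBall_nhdsGT ν x).eventually_lt_const (by simp [hνx])
  obtain ⟨δ, hδ1, hδ⟩ := (hev.and self_mem_nhdsWithin).exists
  refine ⟨δ, hδ, fun r hr => ?_⟩
  have key : r ^ (-s) * μ (closedEBall x r) ≤ 1 :=
    calc r ^ (-s) * μ (closedEBall x r)
        ≤ ∫⁻ y in closedEBall x r, edist x y ^ (-s) ∂μ :=
          rpow_neg_mul_measure_closedEBall_le hs.le x r
      _ = ν (closedEBall x r) := (withDensity_apply _ isClosed_closedEBall.measurableSet).symm
      _ ≤ ν (closedEBall x δ) := measure_mono (closedEBall_subset_closedEBall hr)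
      _ ≤ 1 := hδ1.le
  rwa [mul_comm, ← ENNReal.le_inv_iff_mul_le, ENNReal.rpow_neg, inv_inv] at key

end Energy

theorem measure_le_hausdorffMeasure_of_measure_closedEBall_le {X : Type*} [EMetricSpace X]
    [MeasurableSpace X] [BorelSpace X] {μ : Measure X} {E : Set X} {s : ℝ} {δ : ℝ≥0∞}
    (hδ : 0 < δ) (h : ∀ x ∈ E, ∀ r ≤ δ, μ (closedEBall x r) ≤ r ^ s) :
    μ E ≤ μH[s] E := by
  suffices μ.restrict E ≤ μH[s] by simpa only [Measure.restrict_apply_self] using this E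
  refine Measure.le_hausdorffMeasure s _ δ hδ fun t ht => ?_
  rcases (closure t ∩ E).eq_empty_or_nonempty with hempty | ⟨x, hxt, hxE⟩
  · calc μ.restrict E t ≤ μ.restrict E (closure t) := measure_mono subset_closure
      _ = 0 := by rw [Measure.restrict_apply isClosed_closure.measurableSet, hempty,
          measure_empty]
      _ ≤ _ := zero_le
  have hball : closure t ⊆ closedEBall x (ediam t) := fun y hy => by
    rw [mem_closedEBall, ← ediam_closure]
    exact edist_le_ediam_of_mem hy hxt
  calc μ.restrict E t ≤ μ.restrict E (closure t) := measure_mono subset_closure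
    _ = μ (closure t ∩ E) := Measure.restrict_apply isClosed_closure.measurableSet
    _ ≤ μ (closedEBall x (ediam t)) := measure_mono (inter_subset_left.trans hball)
    _ ≤ ediam t ^ s := h x hxE _ ht

theorem exists_measure_setOf_ne_zero_of_ae_exists {α : Type*} [MeasurableSpace α]
    {μ : Measure α} {P : α → ℝ≥0∞ → Prop} (hP : ∀ x ⦃δ δ'⦄, δ' ≤ δ → P x δ → P x δ')
    (hμ : μ ≠ 0) (h : ∀ᵐ x ∂μ, ∃ δ > 0, P x δ) : ∃ δ > 0, μ {x | P x δ} ≠ 0 := by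
  by_contra! hnull
  have hcover : {x | ∃ δ > 0, P x δ} ⊆ ⋃ n : ℕ, {x | P x (n : ℝ≥0∞)⁻¹} := fun x ⟨δ, hδ, hx⟩ =>
    have ⟨n, hn⟩ := ENNReal.exists_inv_nat_lt hδ.ne'
    mem_iUnion.2 ⟨n, hP x hn.le hx⟩
  have hunion : μ (⋃ n : ℕ, {x | P x (n : ℝ≥0∞)⁻¹}) = 0 :=
    measure_iUnion_null fun n => hnull _ (ENNReal.inv_pos.2 (ENNReal.natCast_ne_top n))
  refine hμ (ae_eq_bot.1 (eventually_false_iff_eq_bot.1 ?_))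
  filter_upwards [h, measure_eq_zero_iff_ae_notMem.1 hunion] with x hx hx' using hx' (hcover hx)

theorem stmt5_general {X : Type*} [MetricSpace X] [MeasurableSpace X] [BorelSpace X]
    (F : Set X) (μ : Measure X) (hμ : μ ≠ 0)
    (hsupp : μ Fᶜ = 0) (s : ℝ) (hs : 0 ≤ s)
    (henergy : (∫⁻ x in F, ∫⁻ y in F, edist x y ^ (-s) ∂μ ∂μ) < ∞) :
    ENNReal.ofReal s ≤ dimH F := by
  rcases hs.eq_or_lt with rfl | hs
  · simp
  have hF : ∀ᵐ x ∂μ, x ∈ F := mem_ae_iff.2 hsupp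
  rw [Measure.restrict_eq_self_of_ae_mem hF] at henergy
  have hpot : ∀ᵐ x ∂μ, ∫⁻ y, edist x y ^ (-s) ∂μ < ∞ :=
    ae_lt_top (lowerSemicontinuous_lintegral (by fun_prop)
      fun y => (ENNReal.continuous_rpow_const.comp (by fun_prop)).lowerSemicontinuous).measurable
      henergy.ne
  obtain ⟨δ, hδ, hE⟩ := exists_measure_setOf_ne_zero_of_ae_exists
    (P := fun x δ => x ∈ F ∧ ∀ r ≤ δ, μ (closedEBall x r) ≤ r ^ s)
    (fun _ _ _ h hx => ⟨hx.1, fun r hr => hx.2 r (hr.trans h)⟩) hμ <| by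
      filter_upwards [hF, hpot] with x hxF hx
      obtain ⟨δ, hδ, hball⟩ := exists_forall_measure_closedEBall_le_rpow hs hx.ne
      exact ⟨δ, hδ, hxF, hball⟩
  have hH : μH[s] F ≠ 0 := ne_bot_of_le_ne_bot hE <|
    (measure_le_hausdorffMeasure_of_measure_closedEBall_le hδ fun _ hx => hx.2).trans
      (measure_mono fun _ hx => hx.1)
  exact le_dimH_of_hausdorffMeasure_ne_zero (d := s.toNNReal) (by rwa [Real.coe_toNNReal _ hs.le])

/-- Potential-theoretic (energy) method: if a metric space subset `F` carries a finite
nonzero Borel measure `μ` supported on `F` whose `s`-energy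
`∫_F ∫_F d(x,y)^{−s} dμ dμ` is finite for some `s ≥ 0`, then `dim_H F ≥ s`. -/
theorem stmt5 {X : Type*} [MetricSpace X] [MeasurableSpace X] [BorelSpace X]
    (F : Set X) (μ : Measure X) [IsFiniteMeasure μ] (hμ : μ ≠ 0)
    (hsupp : μ Fᶜ = 0) (s : ℝ) (hs : 0 ≤ s)
    (henergy : (∫⁻ x in F, ∫⁻ y in F, edist x y ^ (-s) ∂μ ∂μ) < ∞) :
    ENNReal.ofReal s ≤ dimH F :=
  stmt5_general F μ hμ hsupp s hs henergy
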